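/- Let R be a commutative G-graded ring. Then R is a G-graded domain if and only if R is G-graded reduced and the intersection graph Gr_G(R) of graded ideals is complete. -/

import Mathlib

variable {G R : Type*} [AddGroup G] [DecidableEq G] [CommRing R]

/-- The set of proper nontrivial `G`-graded ideals of `R`. -/
def hV (𝒜 : G → AddSubgroup R) [GradedRing 𝒜] : Set (Ideal R) :=
  {I | I ≠ ⊥ ∧ I ≠ ⊤ ∧ Ideal.IsHomogeneous 𝒜 I}

/-- The intersection graph on a set of ideals: two distinct ideals are
adjacent iff their intersection is nonzero. -/
def interGraph (V : Set (Ideal R)) : SimpleGraph V where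
  Adj I J := I ≠ J ∧ (I : Ideal R) ⊓ (J : Ideal R) ≠ ⊥
  symm := ⟨fun I J ⟨h1, h2⟩ => ⟨h1.symm, by rwa [inf_comm] at h2⟩⟩
  loopless := ⟨fun I ⟨h1, _⟩ => h1 rfl⟩

/-!
A nonzero graded ideal contains a nonzero homogeneous element, so in a graded domain the
product of such elements taken from two nonzero graded ideals is a nonzero element of their
intersection. Conversely, if `a b = 0` for nonzero homogeneous `a, b`, then every `c = r a = s b`
in `(a) ∩ (b)` satisfies `c² = r s a b = 0`; the graded ideal `(a) ∩ (b)` thus has only nilpotent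
homogeneous elements, hence is zero when `R` is graded reduced. Then `(a)` and `(b)` are two
vertices of `Gr_G(R)` that are distinct and not adjacent.
-/

section Graded

variable {ι σ A : Type*} [DecidableEq ι] [AddMonoid ι] [CommSemiring A] [SetLike σ A]
  [AddSubmonoidClass σ A] (𝒜 : ι → σ)

def IsGradedDomain : Prop :=
  ∀ i j, ∀ a ∈ 𝒜 i, ∀ b ∈ 𝒜 j, a * b = 0 → a = 0 ∨ b = 0

def IsGradedReduced : Prop :=
  ∀ i, ∀ a ∈ 𝒜 i, IsNilpotent a → a = 0

variable {𝒜} [GradedRing 𝒜]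

theorem Ideal.IsHomogeneous.eq_bot_of_forall_homogeneous_mem_eq_zero {K : Ideal A}
    (hK : K.IsHomogeneous 𝒜) (h : ∀ i, ∀ a ∈ 𝒜 i, a ∈ K → a = 0) : K = ⊥ := by
  rw [← hK.toIdeal_homogeneousCore_eq_self]
  refine Ideal.span_eq_bot.2 ?_
  rintro _ ⟨⟨x, i, hx⟩, hxK, rfl⟩
  exact h i x hx hxK

theorem Ideal.IsHomogeneous.exists_homogeneous_mem_ne_zero {K : Ideal A}
    (hK : K.IsHomogeneous 𝒜) (hK0 : K ≠ ⊥) : ∃ i, ∃ a ∈ 𝒜 i, a ∈ K ∧ a ≠ 0 := by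
  by_contra! h
  exact hK0 (hK.eq_bot_of_forall_homogeneous_mem_eq_zero h)

theorem IsGradedDomain.isGradedReduced (hdom : IsGradedDomain 𝒜) : IsGradedReduced 𝒜 := by
  rintro i a ha ⟨n, hn⟩
  induction n with
  | zero => simpa using congrArg (a * ·) hn
  | succ n ih =>
    rw [pow_succ] at hn
    exact (hdom _ i _ (SetLike.pow_mem_graded n ha) a ha hn).elim ih id

theorem IsGradedDomain.inf_ne_bot (hdom : IsGradedDomain 𝒜) {I J : Ideal A}
    (hI : I.IsHomogeneous 𝒜) (hJ : J.IsHomogeneous 𝒜) (hI0 : I ≠ ⊥) (hJ0 : J ≠ ⊥) :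
    I ⊓ J ≠ ⊥ := by
  obtain ⟨i, a, ha, haI, ha0⟩ := hI.exists_homogeneous_mem_ne_zero hI0
  obtain ⟨j, b, hb, hbJ, hb0⟩ := hJ.exists_homogeneous_mem_ne_zero hJ0
  have hab : a * b ∈ I ⊓ J := ⟨I.mul_mem_right b haI, J.mul_mem_left a hbJ⟩
  intro hbot
  rw [hbot, Ideal.mem_bot] at hab
  exact (hdom i j a ha b hb hab).elim ha0 hb0

theorem IsGradedReduced.span_inf_span_eq_bot (hred : IsGradedReduced 𝒜) {i j : ι} {a b : A}
    (ha : a ∈ 𝒜 i) (hb : b ∈ 𝒜 j) (hab : a * b = 0) :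
    Ideal.span {a} ⊓ Ideal.span {b} = ⊥ := by
  have hhom : (Ideal.span {a} ⊓ Ideal.span {b}).IsHomogeneous 𝒜 :=
    (Ideal.homogeneous_span 𝒜 _ (by rintro _ rfl; exact ⟨i, ha⟩)).inf
      (Ideal.homogeneous_span 𝒜 _ (by rintro _ rfl; exact ⟨j, hb⟩))
  refine hhom.eq_bot_of_forall_homogeneous_mem_eq_zero fun k c hc ⟨hca, hcb⟩ => ?_
  obtain ⟨r, rfl⟩ := Ideal.mem_span_singleton'.1 hca
  obtain ⟨s, hs⟩ := Ideal.mem_span_singleton'.1 hcb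
  refine hred k _ hc ⟨2, ?_⟩
  calc (r * a) ^ 2 = (r * a) * (s * b) := by rw [hs, sq]
    _ = r * s * (a * b) := by ring
    _ = 0 := by rw [hab, mul_zero]

end Graded

theorem stmt4_general (𝒜 : G → AddSubgroup R) [GradedRing 𝒜] :
    (∀ (g h : G), ∀ a ∈ 𝒜 g, ∀ b ∈ 𝒜 h, a * b = 0 → a = 0 ∨ b = 0) ↔
      ((∀ (g : G), ∀ a ∈ 𝒜 g, IsNilpotent a → a = 0) ∧
        (∀ I J : hV 𝒜, I ≠ J → (interGraph (hV 𝒜)).Adj I J)) := by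
  change IsGradedDomain 𝒜 ↔ IsGradedReduced 𝒜 ∧ _
  refine ⟨fun hdom => ⟨hdom.isGradedReduced, fun I J hIJ => ⟨hIJ, ?_⟩⟩, ?_⟩
  · exact hdom.inf_ne_bot I.2.2.2 J.2.2.2 I.2.1 J.2.1
  rintro ⟨hred, hcomplete⟩ g h a ha b hb hab
  by_contra! hne
  have hinf := hred.span_inf_span_eq_bot ha hb hab
  have ha0 : Ideal.span {a} ≠ ⊥ := by simpa using hne.1
  have hb0 : Ideal.span {b} ≠ ⊥ := by simpa using hne.2
  have haV : Ideal.span {a} ∈ hV 𝒜 :=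
    ⟨ha0, fun htop => hb0 (by simpa [htop] using hinf),
      Ideal.homogeneous_span 𝒜 _ (by rintro _ rfl; exact ⟨g, ha⟩)⟩
  have hbV : Ideal.span {b} ∈ hV 𝒜 :=
    ⟨hb0, fun htop => ha0 (by simpa [htop] using hinf),
      Ideal.homogeneous_span 𝒜 _ (by rintro _ rfl; exact ⟨h, hb⟩)⟩
  have hab_ne : (⟨_, haV⟩ : hV 𝒜) ≠ ⟨_, hbV⟩ := fun heq =>
    hb0 (by rwa [Subtype.mk.inj heq, inf_idem] at hinf)
  exact (hcomplete _ _ hab_ne).2 hinf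

/-- A commutative `G`-graded ring is a `G`-graded domain (no nonzero
homogeneous zero-divisors) iff it is `G`-graded reduced (no nonzero nilpotent
homogeneous elements) and the intersection graph of graded ideals is complete. -/
theorem stmt4 (𝒜 : G → AddSubgroup R) [GradedRing 𝒜] [Nontrivial R] :
    (∀ (g h : G), ∀ a ∈ 𝒜 g, ∀ b ∈ 𝒜 h, a * b = 0 → a = 0 ∨ b = 0) ↔
      ((∀ (g : G), ∀ a ∈ 𝒜 g, IsNilpotent a → a = 0) ∧
        (∀ I J : hV 𝒜, I ≠ J → (interGraph (hV 𝒜)).Adj I J)) :=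
  stmt4_general 𝒜
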